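/- Let B = (L, R, E) be a (deterministic) d-left-regular bipartite graph with |L| = |R| = n, meaning every left node has exactly d neighbors. Let t_d = max{t ≥ 1 : |N(G_t) \ N(G_{t−1})| = d} be the number of greedy iterations whose marginal contribution equals d. Then for all k ≥ t_d, |N(G_k)| ≥ (1 − 1/e + (1/e) · (t_d / (n/d))³) · |N(O_k)|. -/

import Mathlib

open Finset

/-- One step of the greedy algorithm on the bipartite graph whose left nodes are
`Fin n`, right nodes are `Fin m`, and whose neighborhoods are given by `N`.
It adds to the current solution `S` the left node with largest marginal
coverage `|N(u) \ N(S)|`, breaking ties by smallest index. -/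
noncomputable def greedyStep {n m : ℕ} (N : Fin n → Finset (Fin m))
    (S : Finset (Fin n)) : Finset (Fin n) :=
  if h : (Finset.univ \ S).Nonempty then
    insert
      (((Finset.univ \ S).filter fun u =>
          ((N u) \ S.biUnion N).card =
            (Finset.univ \ S).sup fun v => ((N v) \ S.biUnion N).card).min'
        (by
          obtain ⟨u, hu, hsup⟩ :=
            Finset.exists_mem_eq_sup (Finset.univ \ S) h
              (fun v => ((N v) \ S.biUnion N).card)
          exact ⟨u, Finset.mem_filter.mpr ⟨hu, hsup.symm⟩⟩))
      S
  else S

/-- The greedy solution after `k` iterations (`greedy N 0 = ∅`). -/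
noncomputable def greedy {n m : ℕ} (N : Fin n → Finset (Fin m)) : ℕ → Finset (Fin n)
  | 0 => ∅
  | k + 1 => greedyStep N (greedy N k)

/-- The coverage `|N(O_k)|` of an optimal solution with cardinality constraint `k`. -/
def optValue {n m : ℕ} (N : Fin n → Finset (Fin m)) (k : ℕ) : ℕ :=
  (Finset.univ.powerset.filter fun S : Finset (Fin n) => S.card ≤ k).sup
    fun S => (S.biUnion N).card

/-- The sample space of the left-regular random model `LRR(n, d)`: all
neighborhood maps in which every left node has exactly `d` of the `n` right
nodes as neighbors. -/
def lrrGraphs (n d : ℕ) : Finset (Fin n → Finset (Fin n)) :=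
  Finset.univ.filter fun N => ∀ i, (N i).card = d

/-- Expectation of `f` under the left-regular random model `LRR(n, d)`
(uniform distribution on `lrrGraphs n d`). -/
noncomputable def lrrExp (n d : ℕ) (f : (Fin n → Finset (Fin n)) → ℝ) : ℝ :=
  (∑ N ∈ lrrGraphs n d, f N) / (lrrGraphs n d).card

open scoped Classical in
/-- Probability of the event `p` under the left-regular random model `LRR(n, d)`. -/
noncomputable def lrrProb (n d : ℕ) (p : (Fin n → Finset (Fin n)) → Prop) : ℝ :=
  ((lrrGraphs n d).filter p).card / (lrrGraphs n d).card

/-- `t_d`: the last greedy iteration `t ≥ 1` whose marginal contribution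
`|N(G_t) \ N(G_{t-1})|` equals `d` (and `0` if no such iteration exists). -/
noncomputable def tLast {n m : ℕ} (N : Fin n → Finset (Fin m)) (d : ℕ) : ℕ :=
  ((Finset.range (n + 1)).filter fun t =>
    1 ≤ t ∧ (((greedy N t).biUnion N) \ ((greedy N (t - 1)).biUnion N)).card = d).sup id

/-!
The first `t_d` greedy steps each cover `d` new right nodes (marginal gains are non-increasing
and bounded by `d`), so `|N(G_{t_d})| = t_d d`. From then on the usual submodularity argument
gives `OPT - |N(G_k)| ≤ (1 - 1/k)^(k - t_d) (OPT - t_d d) ≤ e^(y - 1) (OPT - t_d d)` with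
`y = t_d / k`. Since `OPT ≤ n` and `OPT ≤ k d`, we have `t_d d ≥ z OPT` for `z = max(x, y)`,
`x = t_d d / n`, and then `e^y (1 - z) ≤ e^z (1 - z) ≤ 1 - z³ ≤ 1 - x³` because
`e^z ≤ 1 + z + z²` on `[0, 1]`.
-/

open Real

section Greedy

variable {n m : ℕ} (N : Fin n → Finset (Fin m))

def maxGain (S : Finset (Fin n)) : ℕ :=
  (univ \ S).sup fun v => (N v \ S.biUnion N).card

lemma card_sdiff_le_maxGain (S : Finset (Fin n)) (u : Fin n) :
    (N u \ S.biUnion N).card ≤ maxGain N S := by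
  by_cases hu : u ∈ S
  · simp [sdiff_eq_empty_iff_subset.2 (subset_biUnion_of_mem N hu)]
  · exact le_sup (f := fun v => (N v \ S.biUnion N).card) (by simpa using hu)

lemma maxGain_antitone {S S' : Finset (Fin n)} (h : S ⊆ S') : maxGain N S' ≤ maxGain N S :=
  Finset.sup_le fun v _ =>
    (card_le_card (sdiff_subset_sdiff le_rfl (biUnion_subset_biUnion_of_subset_left N h))).trans
      (card_sdiff_le_maxGain N S v)

lemma maxGain_le {d : ℕ} (hN : ∀ i, (N i).card ≤ d) (S : Finset (Fin n)) :
    maxGain N S ≤ d :=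
  Finset.sup_le fun v _ => (card_le_card sdiff_subset).trans (hN v)

lemma subset_greedyStep (S : Finset (Fin n)) : S ⊆ greedyStep N S := by
  unfold greedyStep
  split
  · exact subset_insert _ _
  · exact Subset.rfl

lemma exists_greedyStep_eq_insert {S : Finset (Fin n)} (h : (univ \ S).Nonempty) :
    ∃ u, (N u \ S.biUnion N).card = maxGain N S ∧ greedyStep N S = insert u S := by
  rw [greedyStep, dif_pos h]
  refine ⟨_, ?_, rfl⟩
  generalize_proofs hne
  exact (mem_filter.1 (min'_mem _ hne)).2

lemma card_biUnion_greedyStep (S : Finset (Fin n)) :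
    ((greedyStep N S).biUnion N).card = (S.biUnion N).card + maxGain N S := by
  by_cases h : (univ \ S).Nonempty
  · obtain ⟨u, hu, hstep⟩ := exists_greedyStep_eq_insert N h
    rw [hstep, biUnion_insert, ← card_sdiff_add_card, hu, add_comm]
  · simp [greedyStep, maxGain, not_nonempty_iff_eq_empty.1 h]

lemma greedy_succ (k : ℕ) : greedy N (k + 1) = greedyStep N (greedy N k) := rfl

lemma greedy_mono : Monotone (greedy N) :=
  monotone_nat_of_le_succ fun k => subset_greedyStep N (greedy N k)

lemma card_greedy_le (t : ℕ) : (greedy N t).card ≤ t := by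
  induction t with
  | zero => simp [greedy]
  | succ t ih =>
    rw [greedy_succ]
    unfold greedyStep
    split
    · exact (card_insert_le _ _).trans (by omega)
    · omega

lemma card_biUnion_greedy (t : ℕ) :
    ((greedy N t).biUnion N).card = ∑ i ∈ range t, maxGain N (greedy N i) := by
  induction t with
  | zero => simp [greedy]
  | succ t ih => rw [greedy_succ, card_biUnion_greedyStep, ih, sum_range_succ]

lemma card_biUnion_greedy_succ_sdiff (t : ℕ) :
    ((greedy N (t + 1)).biUnion N \ (greedy N t).biUnion N).card = maxGain N (greedy N t) := by
  rw [card_sdiff_of_subset (biUnion_subset_biUnion_of_subset_left N (greedy_mono N t.le_succ)),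
    greedy_succ, card_biUnion_greedyStep, Nat.add_sub_cancel_left]

lemma tLast_eq_zero_or_maxGain_eq (d : ℕ) :
    tLast N d = 0 ∨ maxGain N (greedy N (tLast N d - 1)) = d := by
  rw [tLast]
  set s := (range (n + 1)).filter fun t =>
    1 ≤ t ∧ ((greedy N t).biUnion N \ (greedy N (t - 1)).biUnion N).card = d
  rcases s.eq_empty_or_nonempty with hs | hs
  · simp [hs]
  obtain ⟨t, ht, hsup⟩ := exists_mem_eq_sup s hs id
  obtain ⟨i, rfl⟩ : ∃ i, t = i + 1 := ⟨t - 1, by grind⟩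
  right
  rw [hsup, id, Nat.add_sub_cancel, ← card_biUnion_greedy_succ_sdiff]
  exact (mem_filter.1 ht).2.2

lemma maxGain_greedy_of_lt_tLast {d : ℕ} (hN : ∀ i, (N i).card ≤ d) {i : ℕ}
    (hi : i < tLast N d) : maxGain N (greedy N i) = d := by
  refine le_antisymm (maxGain_le N hN _) ?_
  rcases tLast_eq_zero_or_maxGain_eq N d with h | h
  · omega
  · exact h ▸ maxGain_antitone N (greedy_mono N (by omega : i ≤ tLast N d - 1))

lemma card_biUnion_greedy_tLast {d : ℕ} (hN : ∀ i, (N i).card ≤ d) :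
    ((greedy N (tLast N d)).biUnion N).card = tLast N d * d := by
  rw [card_biUnion_greedy, sum_congr rfl fun i hi =>
    maxGain_greedy_of_lt_tLast N hN (mem_range.1 hi), sum_const, card_range, smul_eq_mul]

lemma exists_card_le_card_biUnion_eq_optValue (k : ℕ) :
    ∃ O : Finset (Fin n), O.card ≤ k ∧ (O.biUnion N).card = optValue N k := by
  obtain ⟨O, hO, hsup⟩ := exists_mem_eq_sup
    (univ.powerset.filter fun S : Finset (Fin n) => S.card ≤ k) ⟨∅, by simp⟩
    fun S => (S.biUnion N).card
  exact ⟨O, (mem_filter.1 hO).2, hsup.symm⟩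

lemma card_biUnion_le_optValue {k : ℕ} {S : Finset (Fin n)} (hS : S.card ≤ k) :
    (S.biUnion N).card ≤ optValue N k :=
  le_sup (f := fun S : Finset (Fin n) => (S.biUnion N).card) (by simpa using hS)

lemma optValue_le (k : ℕ) : optValue N k ≤ m := by
  obtain ⟨O, -, hO⟩ := exists_card_le_card_biUnion_eq_optValue N k
  exact hO ▸ (card_le_univ _).trans_eq (Fintype.card_fin m)

lemma optValue_le_mul {d : ℕ} (hN : ∀ i, (N i).card ≤ d) (k : ℕ) :
    optValue N k ≤ k * d := by
  obtain ⟨O, hOk, hO⟩ := exists_card_le_card_biUnion_eq_optValue N k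
  calc optValue N k = (O.biUnion N).card := hO.symm
    _ ≤ ∑ u ∈ O, (N u).card := card_biUnion_le
    _ ≤ O.card * d := sum_le_card_nsmul _ _ _ fun u _ => hN u
    _ ≤ k * d := Nat.mul_le_mul_right d hOk

lemma optValue_le_card_biUnion_add_mul_maxGain (k : ℕ) (S : Finset (Fin n)) :
    optValue N k ≤ (S.biUnion N).card + k * maxGain N S := by
  obtain ⟨O, hOk, hO⟩ := exists_card_le_card_biUnion_eq_optValue N k
  have hcover : O.biUnion N ⊆ S.biUnion N ∪ O.biUnion fun u => N u \ S.biUnion N := by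
    intro r
    simp only [mem_union, mem_biUnion, mem_sdiff]
    tauto
  calc optValue N k = (O.biUnion N).card := hO.symm
    _ ≤ (S.biUnion N).card + (O.biUnion fun u => N u \ S.biUnion N).card :=
      (card_le_card hcover).trans (card_union_le _ _)
    _ ≤ (S.biUnion N).card + O.card * maxGain N S := by
      gcongr
      exact card_biUnion_le.trans (sum_le_card_nsmul _ _ _ fun u _ => card_sdiff_le_maxGain N S u)
    _ ≤ (S.biUnion N).card + k * maxGain N S := by gcongr

end Greedy

section Approximation

variable {n m : ℕ} (N : Fin n → Finset (Fin m))

lemma optValue_sub_card_biUnion_greedy_succ_le (k i : ℕ) :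
    (optValue N k : ℝ) - ((greedy N (i + 1)).biUnion N).card ≤
      (1 - 1 / k) * ((optValue N k : ℝ) - ((greedy N i).biUnion N).card) := by
  have hstep : (((greedy N (i + 1)).biUnion N).card : ℝ) =
      ((greedy N i).biUnion N).card + maxGain N (greedy N i) := by
    exact_mod_cast card_biUnion_greedyStep N (greedy N i)
  have hopt : (optValue N k : ℝ) ≤
      ((greedy N i).biUnion N).card + k * maxGain N (greedy N i) := by
    exact_mod_cast optValue_le_card_biUnion_add_mul_maxGain N k (greedy N i)
  have hgain :
      ((optValue N k : ℝ) - ((greedy N i).biUnion N).card) / k ≤ maxGain N (greedy N i) :=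
    div_le_of_le_mul₀ (by positivity) (by positivity) (by linarith)
  rw [hstep, one_sub_mul, one_div_mul_eq_div]
  linarith

lemma optValue_sub_card_biUnion_greedy_add_le (k T j : ℕ) :
    (optValue N k : ℝ) - ((greedy N (T + j)).biUnion N).card ≤
      (1 - 1 / k) ^ j * ((optValue N k : ℝ) - ((greedy N T).biUnion N).card) :=
  le_geom (u := fun j => (optValue N k : ℝ) - ((greedy N (T + j)).biUnion N).card)
    (sub_nonneg.2 (by simpa using Nat.cast_inv_le_one k)) j
    fun i _ => optValue_sub_card_biUnion_greedy_succ_le N k (T + i)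

lemma optValue_sub_card_biUnion_greedy_le_exp {k T : ℕ} (hk : 0 < k) (hT : T ≤ k) :
    (optValue N k : ℝ) - ((greedy N k).biUnion N).card ≤
      exp (T / k - 1) * ((optValue N k : ℝ) - ((greedy N T).biUnion N).card) := by
  have hpow : (1 - 1 / (k : ℝ)) ^ (k - T) ≤ exp (T / k - 1) := by
    calc (1 - 1 / (k : ℝ)) ^ (k - T) ≤ exp (-(1 / k)) ^ (k - T) := by
          gcongr
          · exact sub_nonneg.2 (by simpa using Nat.cast_inv_le_one k)
          · linarith [add_one_le_exp (-(1 / (k : ℝ)))]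
      _ = exp (T / k - 1) := by
          rw [← exp_nat_mul, Nat.cast_sub hT]
          congr 1
          field_simp
          ring
  have hgap : (0 : ℝ) ≤ (optValue N k : ℝ) - ((greedy N T).biUnion N).card :=
    sub_nonneg.2 (by exact_mod_cast card_biUnion_le_optValue N ((card_greedy_le N T).trans hT))
  calc (optValue N k : ℝ) - ((greedy N k).biUnion N).card
      = (optValue N k : ℝ) - ((greedy N (T + (k - T))).biUnion N).card := by
        rw [Nat.add_sub_cancel' hT]
    _ ≤ (1 - 1 / k) ^ (k - T) * ((optValue N k : ℝ) - ((greedy N T).biUnion N).card) :=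
        optValue_sub_card_biUnion_greedy_add_le N k T (k - T)
    _ ≤ exp (T / k - 1) * ((optValue N k : ℝ) - ((greedy N T).biUnion N).card) := by
        gcongr

end Approximation

lemma Real.exp_mul_one_sub_le_one_sub_pow_three {z : ℝ} (hz0 : 0 ≤ z) (hz1 : z ≤ 1) :
    exp z * (1 - z) ≤ 1 - z ^ 3 := by
  have hexp : exp z ≤ 1 + z + z ^ 2 := by
    linarith [(abs_le.1 (abs_exp_sub_one_sub_id_le (abs_le.2 ⟨by linarith, hz1⟩))).2]
  calc exp z * (1 - z) ≤ (1 + z + z ^ 2) * (1 - z) := by gcongr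
    _ = 1 - z ^ 3 := by ring

lemma le_of_sub_le_exp_mul {x y O P C : ℝ} (hx0 : 0 ≤ x) (hx1 : x ≤ 1) (hy1 : y ≤ 1)
    (hO : 0 ≤ O) (hxP : x * O ≤ P) (hyP : y * O ≤ P)
    (hgap : O - C ≤ exp (y - 1) * (O - P)) :
    (1 - 1 / exp 1 + 1 / exp 1 * x ^ 3) * O ≤ C := by
  set z := max x y
  have hzP : z * O ≤ P := by rw [max_mul_of_nonneg _ _ hO]; exact max_le hxP hyP
  have hz0 : 0 ≤ z := hx0.trans (le_max_left x y)
  have hz1 : z ≤ 1 := max_le hx1 hy1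
  have key : exp y * (O - P) ≤ (1 - x ^ 3) * O :=
    calc exp y * (O - P) ≤ exp y * ((1 - z) * O) := by gcongr; linarith
      _ ≤ exp z * ((1 - z) * O) := by gcongr; exact le_max_right x y
      _ = exp z * (1 - z) * O := by ring
      _ ≤ (1 - z ^ 3) * O := by
          gcongr
          exact exp_mul_one_sub_le_one_sub_pow_three hz0 hz1
      _ ≤ (1 - x ^ 3) * O := by gcongr; exact le_max_left x y
  have : exp (y - 1) * (O - P) ≤ (1 - x ^ 3) * O / exp 1 := by
    rw [exp_sub, div_mul_eq_mul_div]
    gcongr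
  have hexpand : (1 - 1 / exp 1 + 1 / exp 1 * x ^ 3) * O = O - (1 - x ^ 3) * O / exp 1 := by ring
  linarith

/-- **Lemma 3.7 (augmented worst-case analysis).** For a deterministic
`d`-left-regular bipartite graph with `|L| = |R| = n` and all `k ≥ t_d`,
`|N(G_k)| ≥ (1 - 1/e + (1/e)·(t_d/(n/d))³)·|N(O_k)|`. -/
theorem augmented_worst_case (n d : ℕ) (N : Fin n → Finset (Fin n))
    (hreg : ∀ i, (N i).card = d) (k : ℕ) (hk : tLast N d ≤ k) :
    (((greedy N k).biUnion N).card : ℝ) ≥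
      (1 - 1 / Real.exp 1 +
          (1 / Real.exp 1) * ((tLast N d : ℝ) / ((n : ℝ) / d)) ^ 3) *
        (optValue N k : ℝ) := by
  have hN : ∀ i, (N i).card ≤ d := fun i => (hreg i).le
  rcases Nat.eq_zero_or_pos k with rfl | hk0
  · have hopt : optValue N 0 = 0 := by simpa using optValue_le_mul N hN 0
    simp [hopt]
  set T := tLast N d
  have hcovT : ((greedy N T).biUnion N).card = T * d := card_biUnion_greedy_tLast N hN
  have hTd : (T * d : ℝ) ≤ n := by
    exact_mod_cast hcovT ▸ (card_le_univ _).trans_eq (Fintype.card_fin n)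
  have hOn : (optValue N k : ℝ) ≤ n := by exact_mod_cast optValue_le N k
  have hOkd : (optValue N k : ℝ) ≤ k * d := by exact_mod_cast optValue_le_mul N hN k
  have hgap := optValue_sub_card_biUnion_greedy_le_exp N hk0 hk
  rw [hcovT, Nat.cast_mul] at hgap
  refine le_of_sub_le_exp_mul (by positivity) ?_ ?_ (by positivity) ?_ ?_ hgap
  · rw [div_div_eq_mul_div]
    exact div_le_one_of_le₀ hTd (by positivity)
  · exact div_le_one_of_le₀ (by exact_mod_cast hk) (by positivity)
  · rw [div_div_eq_mul_div, div_mul_eq_mul_div]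
    exact div_le_of_le_mul₀ (by positivity) (by positivity) (by gcongr)
  · rw [div_mul_eq_mul_div]
    refine div_le_of_le_mul₀ (by positivity) (by positivity) ?_
    calc (T : ℝ) * optValue N k ≤ T * (k * d) := by gcongr
      _ = T * d * k := by ring
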